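/- Suppose the Fréchet derivative f' is uniformly continuous on C, C is weakly compact, f is strictly convex on C, and the stepsizes (γ_k) are chosen either by line minimization or by the open loop rule. Then the composite minimization has a unique solution x* in C, and the sequence (x_k) generated by the Frank–Wolfe algorithm converges weakly to x*. -/

import Mathlib

/-! The gap `h k = f (x k) - f x*` satisfies, for every `ε > 0`, eventually
`h (k + 1) ≤ (1 - β k) * h k + β k * ε`, where `β` is the open loop stepsize (line minimization
is compared with `β k = 1 / (k + 1)`): the gradient inequality bounds the linear part of a step by
`-β k * h k`, and uniform continuity of `f'` makes the remainder `o(β k)` uniformly on `C`.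
As `∑ β k = ∞`, this forces `h k → 0`. A weak cluster point `z` of `(x k)` lies in `C` by weak
compactness, and `f (x k) ≥ f z + f' z (x k - z)` passes to the weak limit, so `f z ≤ f x*`;
strict convexity then gives `z = x*`. -/

open Filter Topology Set

lemma tendsto_zero_of_le_one_sub_mul {p β : ℕ → ℝ} (hp : ∀ k, 0 ≤ p k)
    (hβ : Tendsto (fun n => ∑ k ∈ Finset.range n, β k) atTop atTop)
    (hrec : ∀ᶠ k in atTop, p (k + 1) ≤ (1 - β k) * p k) :
    Tendsto p atTop (𝓝 0) := by
  set S : ℕ → ℝ := fun n => ∑ k ∈ Finset.range n, β k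
  obtain ⟨N, hN⟩ := eventually_atTop.1 hrec
  have hdecay : ∀ n ≥ N, p n ≤ Real.exp (S N - S n) * p N := by
    intro n hn
    induction n, hn using Nat.le_induction with
    | base => simp
    | succ n hn ih =>
      calc p (n + 1) ≤ (1 - β n) * p n := hN n hn
        _ ≤ Real.exp (-β n) * (Real.exp (S N - S n) * p N) :=
          mul_le_mul (by linarith [Real.add_one_le_exp (-β n)]) ih (hp n) (by positivity)
        _ = Real.exp (S N - S (n + 1)) * p N := by
          rw [← mul_assoc, ← Real.exp_add]
          simp only [S, Finset.sum_range_succ]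
          ring_nf
  have hbound : Tendsto (fun n => Real.exp (S N - S n) * p N) atTop (𝓝 0) := by
    simpa [sub_eq_add_neg] using (Real.tendsto_exp_atBot.comp
      (tendsto_atBot_add_const_left _ (S N) (tendsto_neg_atTop_atBot.comp hβ))).mul_const (p N)
  exact tendsto_of_tendsto_of_tendsto_of_le_of_le' tendsto_const_nhds hbound
    (Eventually.of_forall hp) (eventually_atTop.2 ⟨N, hdecay⟩)

lemma tendsto_zero_of_le_one_sub_mul_add {h β : ℕ → ℝ} (hh : ∀ k, 0 ≤ h k)
    (hβ : ∀ k, β k ∈ Icc (0 : ℝ) 1)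
    (hsum : Tendsto (fun n => ∑ k ∈ Finset.range n, β k) atTop atTop)
    (hrec : ∀ ε > 0, ∀ᶠ k in atTop, h (k + 1) ≤ (1 - β k) * h k + β k * ε) :
    Tendsto h atTop (𝓝 0) := by
  refine tendsto_order.2 ⟨fun a ha => Eventually.of_forall fun k => ha.trans_le (hh k),
    fun a ha => ?_⟩
  -- the excess of `h` over `a / 2` contracts by the factor `1 - β k`
  have hexcess : Tendsto (fun k => max (h k - a / 2) 0) atTop (𝓝 0) := by
    refine tendsto_zero_of_le_one_sub_mul (fun k => le_max_right _ _) hsum ?_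
    filter_upwards [hrec (a / 2) (half_pos ha)] with k hk
    have h1β : 0 ≤ 1 - β k := sub_nonneg.2 (hβ k).2
    refine max_le ?_ (mul_nonneg h1β (le_max_right _ _))
    calc h (k + 1) - a / 2 ≤ (1 - β k) * (h k - a / 2) := by linarith
      _ ≤ (1 - β k) * max (h k - a / 2) 0 := by gcongr; exact le_max_left _ _
  filter_upwards [hexcess.eventually (gt_mem_nhds (half_pos ha))] with k hk
  linarith [le_max_left (h k - a / 2) 0]

section
variable {X : Type*} [NormedAddCommGroup X] [NormedSpace ℝ X]

lemma ConvexOn.apply_sub_le_sub_of_hasFDerivAt {s : Set X} {f : X → ℝ} {φ : X →L[ℝ] ℝ}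
    {a b : X} (hf : ConvexOn ℝ s f) (ha : a ∈ s) (hb : b ∈ s) (hfa : HasFDerivAt f φ a) :
    φ (b - a) ≤ f b - f a := by
  let ℓ : ℝ →ᵃ[ℝ] X := AffineMap.lineMap a b
  have hg : ConvexOn ℝ (ℓ ⁻¹' s) (f ∘ ℓ) := hf.comp_affineMap ℓ
  have hderiv : HasDerivAt (f ∘ ℓ) (φ (b - a)) 0 :=
    hfa.comp_hasDerivAt_of_eq 0 AffineMap.hasDerivAt_lineMap
      (AffineMap.lineMap_apply_zero a b).symm
  simpa [slope, ℓ] using hg.le_slope_of_hasDerivAt (by simpa [ℓ] using ha)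
    (by simpa [ℓ] using hb) zero_lt_one hderiv

lemma frankWolfe_step_sub_le {C : Set X} {f : X → ℝ} {φ : X →L[ℝ] ℝ} {u v xstar : X} {t η : ℝ}
    (hf : ConvexOn ℝ C f) (hu : u ∈ C) (hxstar : xstar ∈ C) (hfu : HasFDerivAt f φ u)
    (hv : φ v ≤ φ xstar) (ht : 0 ≤ t)
    (hη : f (u + t • (v - u)) - f u - φ (t • (v - u)) ≤ t * η) :
    f (u + t • (v - u)) - f xstar ≤ (1 - t) * (f u - f xstar) + t * η := by
  have hgap : φ (v - u) ≤ f xstar - f u := by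
    calc φ (v - u) ≤ φ (xstar - u) := by simpa only [map_sub, sub_le_sub_iff_right] using hv
      _ ≤ f xstar - f u := hf.apply_sub_le_sub_of_hasFDerivAt hu hxstar hfu
  rw [map_smul, smul_eq_mul] at hη
  nlinarith

lemma Convex.exists_sub_sub_le_of_uniformContinuousOn {s : Set X} {f : X → ℝ}
    {f' : X → X →L[ℝ] ℝ} (hs : Convex ℝ s) (hf : ∀ x ∈ s, HasFDerivAt f (f' x) x)
    (hf' : UniformContinuousOn f' s) {ε : ℝ} (hε : 0 < ε) :
    ∃ δ > 0, ∀ u ∈ s, ∀ w ∈ s, dist w u < δ → f w - f u - f' u (w - u) ≤ ε * ‖w - u‖ := by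
  obtain ⟨δ, hδ, hf'δ⟩ := Metric.uniformContinuousOn_iff.1 hf' ε hε
  refine ⟨δ, hδ, fun u hu w hw hwu => ?_⟩
  have hbound : ∀ y ∈ s ∩ Metric.ball u δ, ‖f' y - f' u‖ ≤ ε := fun y hy =>
    (dist_eq_norm (f' y) (f' u) ▸ hf'δ y hy.1 u hu hy.2).le
  exact (le_abs_self _).trans <|
    (hs.inter (convex_ball u δ)).norm_image_sub_le_of_norm_hasFDerivWithin_le'
      (fun y hy => (hf y hy.1).hasFDerivWithinAt) hbound ⟨hu, Metric.mem_ball_self hδ⟩ ⟨hw, hwu⟩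

theorem frankWolfe_tendsto_apply {C : Set X} {f : X → ℝ} {f' : X → X →L[ℝ] ℝ} {xstar : X}
    {x xbar : ℕ → X} {β : ℕ → ℝ} (hCcv : Convex ℝ C) (hCbd : Bornology.IsBounded C)
    (hf : ConvexOn ℝ C f) (hfderiv : ∀ x ∈ C, HasFDerivAt f (f' x) x)
    (hfUC : UniformContinuousOn f' C) (hxstarC : xstar ∈ C) (hxstarmin : ∀ y ∈ C, f xstar ≤ f y)
    (hxC : ∀ k, x k ∈ C) (hxbarC : ∀ k, xbar k ∈ C)
    (hxbarmin : ∀ k, f' (x k) (xbar k) ≤ f' (x k) xstar)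
    (hβ : ∀ k, β k ∈ Icc (0 : ℝ) 1) (hβ0 : Tendsto β atTop (𝓝 0))
    (hβsum : Tendsto (fun n => ∑ k ∈ Finset.range n, β k) atTop atTop)
    (hdesc : ∀ k, f (x (k + 1)) ≤ f (x k + β k • (xbar k - x k))) :
    Tendsto (fun k => f (x k)) atTop (𝓝 (f xstar)) := by
  rw [← tendsto_sub_nhds_zero_iff]
  refine tendsto_zero_of_le_one_sub_mul_add (fun k => sub_nonneg.2 (hxstarmin _ (hxC k))) hβ
    hβsum fun ε hε => ?_
  set D := Metric.diam C
  have hD : 0 < D + 1 := by linarith [Metric.diam_nonneg (s := C)]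
  obtain ⟨δ, hδ, hlin⟩ := hCcv.exists_sub_sub_le_of_uniformContinuousOn hfderiv hfUC
    (div_pos hε hD)
  have hsmall : ∀ᶠ k in atTop, β k * D < δ :=
    (hβ0.mul_const D).eventually (gt_mem_nhds (by rwa [zero_mul]))
  filter_upwards [hsmall] with k hk
  set w := x k + β k • (xbar k - x k)
  have hwC : w ∈ C := hCcv.add_smul_sub_mem (hxC k) (hxbarC k) (hβ k)
  have hdist : ‖w - x k‖ ≤ β k * D := by
    rw [add_sub_cancel_left, norm_smul, Real.norm_of_nonneg (hβ k).1, ← dist_eq_norm]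
    exact mul_le_mul_of_nonneg_left (Metric.dist_le_diam_of_mem hCbd (hxbarC k) (hxC k)) (hβ k).1
  have hη : f w - f (x k) - f' (x k) (β k • (xbar k - x k)) ≤ β k * ε := by
    calc _ ≤ ε / (D + 1) * ‖w - x k‖ := by
          simpa [w] using
            hlin (x k) (hxC k) w hwC (((dist_eq_norm _ _).trans_le hdist).trans_lt hk)
      _ ≤ ε / (D + 1) * (β k * (D + 1)) := by gcongr; linarith [(hβ k).1]
      _ = β k * ε := by field_simp
  calc f (x (k + 1)) - f xstar ≤ f w - f xstar := by linarith [hdesc k]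
    _ ≤ _ :=
      frankWolfe_step_sub_le hf (hxC k) hxstarC (hfderiv _ (hxC k)) (hxbarmin k) (hβ k).1 hη

lemma ConvexOn.le_of_tendsto_toWeakSpace {ι : Type*} {l : Filter ι} [l.NeBot] {s : Set X}
    {f : X → ℝ} {φ : X →L[ℝ] ℝ} {u : ι → X} {z : X} {L : ℝ} (hf : ConvexOn ℝ s f) (hz : z ∈ s)
    (hfz : HasFDerivAt f φ z) (hu : ∀ᶠ i in l, u i ∈ s)
    (hweak : Tendsto (fun i => toWeakSpace ℝ X (u i)) l (𝓝 (toWeakSpace ℝ X z)))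
    (hL : Tendsto (fun i => f (u i)) l (𝓝 L)) : f z ≤ L := by
  have hφ : Tendsto (fun i => φ (u i)) l (𝓝 (φ z)) :=
    ((WeakBilin.eval_continuous _ φ).tendsto _).comp hweak
  refine le_of_tendsto_of_tendsto (by simpa using (hφ.sub_const (φ z)).const_add (f z)) hL ?_
  filter_upwards [hu] with i hi
  linarith [map_sub φ (u i) z, hf.apply_sub_le_sub_of_hasFDerivAt hz hi hfz]

lemma StrictConvexOn.tendsto_toWeakSpace_of_tendsto_isMinOn {ι : Type*} {l : Filter ι}
    {C : Set X} {f : X → ℝ} {f' : X → X →L[ℝ] ℝ} {u : ι → X} {xstar : X}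
    (hCwc : IsCompact (toWeakSpace ℝ X '' C)) (hf : StrictConvexOn ℝ C f)
    (hfderiv : ∀ x ∈ C, HasFDerivAt f (f' x) x) (hxstarC : xstar ∈ C) (hxstar : IsMinOn f C xstar)
    (hu : ∀ᶠ i in l, u i ∈ C) (hfu : Tendsto (fun i => f (u i)) l (𝓝 (f xstar))) :
    Tendsto (fun i => toWeakSpace ℝ X (u i)) l (𝓝 (toWeakSpace ℝ X xstar)) := by
  refine hCwc.tendsto_nhds_of_unique_mapClusterPt (hu.mono fun i hi => mem_image_of_mem _ hi) ?_
  rintro _ ⟨z, hzC, rfl⟩ hz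
  obtain ⟨U, hUl, hUz⟩ := mapClusterPt_iff_ultrafilter.1 hz
  have hfz : f z ≤ f xstar := hf.convexOn.le_of_tendsto_toWeakSpace hzC (hfderiv z hzC)
    (hUl hu) hUz (hfu.mono_left hUl)
  have hzmin : IsMinOn f C z := fun y hy => hfz.trans (hxstar hy)
  rw [hf.eq_of_isMinOn hzmin hxstar hzC hxstarC]

end

theorem stmt_5_general
    {X : Type*} [NormedAddCommGroup X] [NormedSpace ℝ X]
    (C : Set X)
    (hCbd : Bornology.IsBounded C) (hCcv : Convex ℝ C)
    (hCwc : IsCompact (⇑(toWeakSpace ℝ X) '' C))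
    (f : X → ℝ) (f' : X → X →L[ℝ] ℝ)
    (hfstrict : StrictConvexOn ℝ C f)
    (hfderiv : ∀ x : X, HasFDerivAt f (f' x) x)
    (hfUC : UniformContinuousOn f' C)
    (xstar : X) (hxstarC : xstar ∈ C) (hxstarmin : ∀ y ∈ C, f xstar ≤ f y)
    (x xbar : ℕ → X) (γ : ℕ → ℝ)
    (hx0 : x 0 ∈ C)
    (hxbarC : ∀ k, xbar k ∈ C)
    (hxbarmin : ∀ k, ∀ y ∈ C, f' (x k) (xbar k) ≤ f' (x k) y)
    (hupdate : ∀ k, x (k + 1) = x k + γ k • (xbar k - x k))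
    (hstep :
      ((∀ k, γ k ∈ Set.Icc (0 : ℝ) 1) ∧
        ∀ k, ∀ γ' ∈ Set.Icc (0 : ℝ) 1,
          f (x k + γ k • (xbar k - x k)) ≤ f (x k + γ' • (xbar k - x k)))
      ∨ ((∀ k, γ k ∈ Set.Ioc (0 : ℝ) 1) ∧ Tendsto γ atTop (𝓝 0) ∧
          Tendsto (fun n => ∑ k ∈ Finset.range n, γ k) atTop atTop)) :
    (∀ z ∈ C, (∀ y ∈ C, f z ≤ f y) → z = xstar) ∧
      Tendsto (fun k => toWeakSpace ℝ X (x k)) atTop (𝓝 (toWeakSpace ℝ X xstar)) := by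
  have hxstar : IsMinOn f C xstar := fun y hy => hxstarmin y hy
  refine ⟨fun z hz hzmin => hfstrict.eq_of_isMinOn (fun y hy => hzmin y hy) hxstar hz hxstarC, ?_⟩
  have hγ : ∀ k, γ k ∈ Icc (0 : ℝ) 1 := hstep.elim (·.1) fun h k => Ioc_subset_Icc_self (h.1 k)
  have hxC : ∀ k, x k ∈ C :=
    Nat.rec hx0 fun k hk => by rw [hupdate k]; exact hCcv.add_smul_sub_mem hk (hxbarC k) (hγ k)
  obtain ⟨β, hβ, hβ0, hβsum, hdesc⟩ : ∃ β : ℕ → ℝ, (∀ k, β k ∈ Icc (0 : ℝ) 1) ∧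
      Tendsto β atTop (𝓝 0) ∧ Tendsto (fun n => ∑ k ∈ Finset.range n, β k) atTop atTop ∧
      ∀ k, f (x (k + 1)) ≤ f (x k + β k • (xbar k - x k)) := by
    rcases hstep with ⟨-, hmin⟩ | ⟨hγIoc, hγ0, hγsum⟩
    · -- line minimization does at least as well as the open loop rule `1 / (k + 1)`
      have hharm (k : ℕ) : 1 / ((k : ℝ) + 1) ∈ Icc (0 : ℝ) 1 :=
        ⟨by positivity, div_le_one_of_le₀ (by linarith [k.cast_nonneg (α := ℝ)]) (by positivity)⟩
      exact ⟨_, hharm, tendsto_one_div_add_atTop_nhds_zero_nat,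
        Real.tendsto_sum_range_one_div_nat_succ_atTop, fun k => hupdate k ▸ hmin k _ (hharm k)⟩
    · exact ⟨γ, fun k => Ioc_subset_Icc_self (hγIoc k), hγ0, hγsum,
        fun k => (congrArg f (hupdate k)).le⟩
  have hfderivC : ∀ y ∈ C, HasFDerivAt f (f' y) y := fun y _ => hfderiv y
  exact hfstrict.tendsto_toWeakSpace_of_tendsto_isMinOn hCwc hfderivC hxstarC hxstar
    (.of_forall hxC) (frankWolfe_tendsto_apply hCcv hCbd hfstrict.convexOn hfderivC hfUC hxstarC
      hxstarmin hxC hxbarC (fun k => hxbarmin k xstar hxstarC) hβ hβ0 hβsum hdesc)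

/-- **Weak convergence of Frank–Wolfe iterates under strict convexity**
(Theorem 3.3 (i)). If `C` is weakly compact, `f'` is uniformly continuous on `C`, `f` is
strictly convex on `C`, and the stepsizes are chosen by line minimization or by the open
loop rule, then the minimization problem has a unique solution `x*` in `C` and the
Frank–Wolfe iterates converge weakly to `x*`. -/
theorem stmt_5
    {X : Type*} [NormedAddCommGroup X] [NormedSpace ℝ X] [CompleteSpace X]
    (C : Set X) (hCne : C.Nonempty) (hCcl : IsClosed C)
    (hCbd : Bornology.IsBounded C) (hCcv : Convex ℝ C)
    (hCwc : IsCompact (⇑(toWeakSpace ℝ X) '' C))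
    (f : X → ℝ) (f' : X → X →L[ℝ] ℝ)
    (hfconv : ConvexOn ℝ Set.univ f)
    (hfstrict : StrictConvexOn ℝ C f)
    (hfderiv : ∀ x : X, HasFDerivAt f (f' x) x)
    (hfUC : UniformContinuousOn f' C)
    (xstar : X) (hxstarC : xstar ∈ C) (hxstarmin : ∀ y ∈ C, f xstar ≤ f y)
    (x xbar : ℕ → X) (γ : ℕ → ℝ)
    (hx0 : x 0 ∈ C)
    (hxbarC : ∀ k, xbar k ∈ C)
    (hxbarmin : ∀ k, ∀ y ∈ C, f' (x k) (xbar k) ≤ f' (x k) y)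
    (hupdate : ∀ k, x (k + 1) = x k + γ k • (xbar k - x k))
    (hstep :
      ((∀ k, γ k ∈ Set.Icc (0 : ℝ) 1) ∧
        ∀ k, ∀ γ' ∈ Set.Icc (0 : ℝ) 1,
          f (x k + γ k • (xbar k - x k)) ≤ f (x k + γ' • (xbar k - x k)))
      ∨ ((∀ k, γ k ∈ Set.Ioc (0 : ℝ) 1) ∧ Tendsto γ atTop (𝓝 0) ∧
          Tendsto (fun n => ∑ k ∈ Finset.range n, γ k) atTop atTop)) :
    (∀ z ∈ C, (∀ y ∈ C, f z ≤ f y) → z = xstar) ∧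
      Tendsto (fun k => toWeakSpace ℝ X (x k)) atTop (𝓝 (toWeakSpace ℝ X xstar)) :=
  stmt_5_general C hCbd hCcv hCwc f f' hfstrict hfderiv hfUC xstar hxstarC hxstarmin x xbar γ hx0
    hxbarC hxbarmin hupdate hstep
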